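/- Let ψ(x) = B₀x + b₀ + φ(x) where φ is Lipschitz with constant L < σ_min(B₀), and let x* be the unique zero of ψ. Then for all x ∈ ℝⁿ: ⟨x − x*, B₀ᵀ ψ(x)⟩ ≥ ½‖ψ(x)‖². -/

import Mathlib

noncomputable def mApp {n : ℕ} (B : Matrix (Fin n) (Fin n) ℝ) (x : EuclideanSpace ℝ (Fin n)) :
    EuclideanSpace ℝ (Fin n) := Matrix.toEuclideanCLM (𝕜 := ℝ) B x

noncomputable def specNorm {n : ℕ} (B : Matrix (Fin n) (Fin n) ℝ) : ℝ :=
  ‖Matrix.toEuclideanCLM (𝕜 := ℝ) B‖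

noncomputable def sigmaMin {n : ℕ} (B : Matrix (Fin n) (Fin n) ℝ) : ℝ :=
  sInf {r : ℝ | ∃ v : EuclideanSpace ℝ (Fin n), ‖v‖ = 1 ∧ r = ‖mApp B v‖}

def vabs {n : ℕ} (v : EuclideanSpace ℝ (Fin n)) : EuclideanSpace ℝ (Fin n) := WithLp.toLp 2 (fun i => |v i|)

/-! The decomposition `ψ x = B₀ (x - x*) + (φ x - φ x*)` has a Lipschitz part no longer than its
linear part, because `L < σ_min(B₀)`; and for any `a, w` with `‖w‖ ≤ ‖a‖` one has
`⟪a, a + w⟫ - ½‖a + w‖² = ½(‖a‖² - ‖w‖²) ≥ 0`. Moving `B₀` across the inner product as `B₀ᵀ`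
gives the claim. -/

theorem half_norm_add_sq_le_inner_add {E : Type*} [NormedAddCommGroup E] [InnerProductSpace ℝ E]
    {a w : E} (hwa : ‖w‖ ≤ ‖a‖) : 1 / 2 * ‖a + w‖ ^ 2 ≤ inner ℝ a (a + w) := by
  have hsq : ‖w‖ ^ 2 ≤ ‖a‖ ^ 2 := pow_le_pow_left₀ (norm_nonneg w) hwa 2
  rw [norm_add_sq_real, inner_add_right, real_inner_self_eq_norm_sq]
  linarith

theorem mApp_sub {n : ℕ} (B : Matrix (Fin n) (Fin n) ℝ) (x y : EuclideanSpace ℝ (Fin n)) :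
    mApp B (x - y) = mApp B x - mApp B y :=
  map_sub _ x y

theorem mApp_smul {n : ℕ} (B : Matrix (Fin n) (Fin n) ℝ) (c : ℝ) (x : EuclideanSpace ℝ (Fin n)) :
    mApp B (c • x) = c • mApp B x :=
  map_smul _ c x

theorem inner_mApp_transpose {n : ℕ} (B : Matrix (Fin n) (Fin n) ℝ)
    (u y : EuclideanSpace ℝ (Fin n)) :
    inner ℝ u (mApp B.transpose y) = inner ℝ (mApp B u) y := by
  have hadj : mApp B.transpose y = (Matrix.toEuclideanCLM (𝕜 := ℝ) B).adjoint y := by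
    rw [mApp, ← ContinuousLinearMap.star_eq_adjoint, ← map_star,
      Matrix.star_eq_conjTranspose, Matrix.conjTranspose_eq_transpose_of_trivial]
  rw [hadj, ContinuousLinearMap.adjoint_inner_right]
  rfl

theorem sigmaMin_mul_norm_le {n : ℕ} (B : Matrix (Fin n) (Fin n) ℝ) (v : EuclideanSpace ℝ (Fin n)) :
    sigmaMin B * ‖v‖ ≤ ‖mApp B v‖ := by
  rcases eq_or_ne v 0 with rfl | hv
  · simp
  have hpos : 0 < ‖v‖ := norm_pos_iff.mpr hv
  have hbdd : BddBelow {r : ℝ | ∃ v : EuclideanSpace ℝ (Fin n), ‖v‖ = 1 ∧ r = ‖mApp B v‖} :=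
    ⟨0, by rintro r ⟨w, -, rfl⟩; exact norm_nonneg _⟩
  have hunit : ‖‖v‖⁻¹ • v‖ = 1 := by
    rw [norm_smul, norm_inv, norm_norm, inv_mul_cancel₀ hpos.ne']
  have hle : sigmaMin B ≤ ‖mApp B (‖v‖⁻¹ • v)‖ := csInf_le hbdd ⟨_, hunit, rfl⟩
  rw [mApp_smul, norm_smul, norm_inv, norm_norm, inv_mul_eq_div] at hle
  exact (le_div_iff₀ hpos).mp hle

theorem stmt_7 {n : ℕ} (B₀ : Matrix (Fin n) (Fin n) ℝ) (b₀ : EuclideanSpace ℝ (Fin n))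
    (φ : EuclideanSpace ℝ (Fin n) → EuclideanSpace ℝ (Fin n)) (L : ℝ)
    (hφ : ∀ x y, ‖φ x - φ y‖ ≤ L * ‖x - y‖) (hσ : L < sigmaMin B₀)
    (ψ : EuclideanSpace ℝ (Fin n) → EuclideanSpace ℝ (Fin n))
    (hψ : ∀ x, ψ x = mApp B₀ x + b₀ + φ x)
    (xs : EuclideanSpace ℝ (Fin n)) (hxs : ψ xs = 0) :
    ∀ x : EuclideanSpace ℝ (Fin n),
      (inner ℝ (x - xs) (mApp B₀.transpose (ψ x)) : ℝ) ≥ (1 / 2) * ‖ψ x‖ ^ 2 := by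
  intro x
  have hdecomp : ψ x = mApp B₀ (x - xs) + (φ x - φ xs) := by
    rw [← sub_zero (ψ x), ← hxs, hψ, hψ, mApp_sub]
    abel
  have hshort : ‖φ x - φ xs‖ ≤ ‖mApp B₀ (x - xs)‖ :=
    calc ‖φ x - φ xs‖ ≤ L * ‖x - xs‖ := hφ x xs
      _ ≤ sigmaMin B₀ * ‖x - xs‖ := by gcongr
      _ ≤ ‖mApp B₀ (x - xs)‖ := sigmaMin_mul_norm_le B₀ (x - xs)
  rw [inner_mApp_transpose, hdecomp]
  exact half_norm_add_sq_le_inner_add hshort
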